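/- Let n ≥ 4 and consider the subspaces V_0, V_1, V_2, V_3, V_4, V_5, V_6 of ℝ^{n×n} with the S_n action (σ·X)_{ij} = X_{σ⁻¹(i),σ⁻¹(j)}. There exist S_n-equivariant linear bijections V_0 → V_1, V_2 → V_3, and V_2 → V_4; moreover, for any two distinct spaces among {V_0, V_2, V_5, V_6} there exists no S_n-equivariant linear bijection between them. -/

import Mathlib

open Matrix

namespace GraphIso

variable (n : ℕ)

variable (n : ℕ)

/-- The action of `Sₙ` on `n × n` matrices: `(σ · X) i j = X (σ⁻¹ i) (σ⁻¹ j)`. -/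
def act (σ : Equiv.Perm (Fin n)) (X : Matrix (Fin n) (Fin n) ℝ) :
    Matrix (Fin n) (Fin n) ℝ :=
  Matrix.of fun i j => X (σ⁻¹ i) (σ⁻¹ j)

/-- The all-ones matrix `J`. -/
def J : Matrix (Fin n) (Fin n) ℝ := Matrix.of fun _ _ => (1 : ℝ)

/-- `V₀`: multiples of the identity. -/
def V0 : Submodule ℝ (Matrix (Fin n) (Fin n) ℝ) where
  carrier := {X | ∃ a : ℝ, X = a • (1 : Matrix (Fin n) (Fin n) ℝ)}
  zero_mem' := ⟨0, by simp⟩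
  add_mem' := by
    rintro X Y ⟨a, rfl⟩ ⟨b, rfl⟩
    exact ⟨a + b, (add_smul a b _).symm⟩
  smul_mem' := by
    rintro c X ⟨a, rfl⟩
    exact ⟨c * a, (mul_smul c a _).symm⟩

/-- `V₁`: multiples of `J - I`. -/
def V1 : Submodule ℝ (Matrix (Fin n) (Fin n) ℝ) where
  carrier := {X | ∃ a : ℝ, X = a • (J n - 1)}
  zero_mem' := ⟨0, by simp⟩
  add_mem' := by
    rintro X Y ⟨a, rfl⟩ ⟨b, rfl⟩
    exact ⟨a + b, (add_smul a b _).symm⟩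
  smul_mem' := by
    rintro c X ⟨a, rfl⟩
    exact ⟨c * a, (mul_smul c a _).symm⟩

/-- `V₂`: diagonal matrices with trace zero. -/
def V2 : Submodule ℝ (Matrix (Fin n) (Fin n) ℝ) where
  carrier := {X | (∀ i j, i ≠ j → X i j = 0) ∧ ∑ i, X i i = 0}
  zero_mem' := ⟨fun _ _ _ => rfl, by simp⟩
  add_mem' := by
    rintro X Y ⟨hX1, hX2⟩ ⟨hY1, hY2⟩
    refine ⟨fun i j hij => ?_, ?_⟩
    · simp [Matrix.add_apply, hX1 i j hij, hY1 i j hij]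
    · simp [Matrix.add_apply, Finset.sum_add_distrib, hX2, hY2]
  smul_mem' := by
    rintro c X ⟨hX1, hX2⟩
    refine ⟨fun i j hij => ?_, ?_⟩
    · simp [Matrix.smul_apply, hX1 i j hij]
    · simp [Matrix.smul_apply, ← Finset.mul_sum, hX2]

/-- `V₃`: matrices `r ⬝ 1ᵀ` with constant rows, `∑ rᵢ = 0`. -/
def V3 : Submodule ℝ (Matrix (Fin n) (Fin n) ℝ) where
  carrier := {X | ∃ r : Fin n → ℝ, (∑ i, r i) = 0 ∧ X = Matrix.of fun i _ => r i}
  zero_mem' := ⟨0, by simp, rfl⟩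
  add_mem' := by
    rintro X Y ⟨r, hr, rfl⟩ ⟨r', hr', rfl⟩
    exact ⟨r + r', by simp [Finset.sum_add_distrib, hr, hr'], by ext i j; simp⟩
  smul_mem' := by
    rintro c X ⟨r, hr, rfl⟩
    exact ⟨c • r, by simp [← Finset.mul_sum, hr], by ext i j; simp⟩

/-- `V₄`: matrices `1 ⬝ cᵀ` with constant columns, `∑ cⱼ = 0`. -/
def V4 : Submodule ℝ (Matrix (Fin n) (Fin n) ℝ) where
  carrier := {X | ∃ c : Fin n → ℝ, (∑ j, c j) = 0 ∧ X = Matrix.of fun _ j => c j}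
  zero_mem' := ⟨0, by simp, rfl⟩
  add_mem' := by
    rintro X Y ⟨r, hr, rfl⟩ ⟨r', hr', rfl⟩
    exact ⟨r + r', by simp [Finset.sum_add_distrib, hr, hr'], by ext i j; simp⟩
  smul_mem' := by
    rintro c X ⟨r, hr, rfl⟩
    exact ⟨c • r, by simp [← Finset.mul_sum, hr], by ext i j; simp⟩

/-- `V₅`: antisymmetric matrices whose rows sum to zero. -/
def V5 : Submodule ℝ (Matrix (Fin n) (Fin n) ℝ) where
  carrier := {X | X = -Xᵀ ∧ ∀ i, ∑ j, X i j = 0}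
  zero_mem' := ⟨by simp, by simp⟩
  add_mem' := by
    rintro X Y ⟨hX1, hX2⟩ ⟨hY1, hY2⟩
    refine ⟨?_, fun i => ?_⟩
    · rw [Matrix.transpose_add, neg_add]
      exact congrArg₂ (· + ·) hX1 hY1
    · simp [Matrix.add_apply, Finset.sum_add_distrib, hX2 i, hY2 i]
  smul_mem' := by
    rintro c X ⟨hX1, hX2⟩
    refine ⟨?_, fun i => ?_⟩
    · rw [Matrix.transpose_smul, ← smul_neg]
      exact congrArg (c • ·) hX1
    · simp [Matrix.smul_apply, ← Finset.mul_sum, hX2 i]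

/-- `V₆`: symmetric matrices with zero diagonal whose rows sum to zero. -/
def V6 : Submodule ℝ (Matrix (Fin n) (Fin n) ℝ) where
  carrier := {X | X = Xᵀ ∧ (∀ i, ∑ j, X i j = 0) ∧ ∀ i, X i i = 0}
  zero_mem' := ⟨by simp, by simp, by simp⟩
  add_mem' := by
    rintro X Y ⟨hX1, hX2, hX3⟩ ⟨hY1, hY2, hY3⟩
    refine ⟨?_, fun i => ?_, fun i => ?_⟩
    · rw [Matrix.transpose_add]
      exact congrArg₂ (· + ·) hX1 hY1
    · simp [Matrix.add_apply, Finset.sum_add_distrib, hX2 i, hY2 i]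
    · simp [Matrix.add_apply, hX3 i, hY3 i]
  smul_mem' := by
    rintro c X ⟨hX1, hX2, hX3⟩
    refine ⟨?_, fun i => ?_, fun i => ?_⟩
    · rw [Matrix.transpose_smul]
      exact congrArg (c • ·) hX1
    · simp [Matrix.smul_apply, ← Finset.mul_sum, hX2 i]
    · simp [Matrix.smul_apply, hX3 i]


/-- The family of the seven subspaces `V₀, …, V₆`. -/
def V : Fin 7 → Submodule ℝ (Matrix (Fin n) (Fin n) ℝ) :=
  ![V0 n, V1 n, V2 n, V3 n, V4 n, V5 n, V6 n]

/-- A linear map `L` between two subspaces of `ℝⁿˣⁿ` is `Sₙ`-equivariant if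
`L (σ · X) = σ · L X` for all `σ` and all `X` (whenever `σ · X` lies in the
source subspace). -/
def IsEquivariantMap {U W : Submodule ℝ (Matrix (Fin n) (Fin n) ℝ)}
    (L : U →ₗ[ℝ] W) : Prop :=
  ∀ (σ : Equiv.Perm (Fin n)) (X : U) (h : act n σ (X : Matrix (Fin n) (Fin n) ℝ) ∈ U),
    ((L ⟨act n σ (X : Matrix (Fin n) (Fin n) ℝ), h⟩ : W) : Matrix (Fin n) (Fin n) ℝ)
      = act n σ ((L X : W) : Matrix (Fin n) (Fin n) ℝ)

/-!
An equivariant linear bijection `L : U → W` maps a nonzero matrix negated by every permutation of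
a set `S` to another such matrix, and if `W` is `Sₙ`-invariant, so does its inverse. The spaces
are told apart by three such sets of transpositions: `{(a b)}` negates a nonzero diagonal matrix of
`V₂` but nothing in `V₀`; disjoint `{(a b), (c d)}` negate a nonzero matrix of `V₆` but nothing in
`V₀` or `V₂`; adjacent `{(a b), (b c)}` negate a nonzero matrix of `V₅` but nothing in `V₀`, `V₂` or
`V₆`. The isomorphisms are `X ↦ (J - I) X`, `X ↦ X J` and `X ↦ J X`, which commute with the action
because `I` and `J` are fixed by it.
-/

section Development

variable {n}

lemma act_eq_submatrix (σ : Equiv.Perm (Fin n)) (X : Matrix (Fin n) (Fin n) ℝ) :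
    act n σ X = X.submatrix ⇑σ⁻¹ ⇑σ⁻¹ := rfl

@[simp]
lemma act_add (σ : Equiv.Perm (Fin n)) (X Y : Matrix (Fin n) (Fin n) ℝ) :
    act n σ (X + Y) = act n σ X + act n σ Y := rfl

@[simp]
lemma act_sub (σ : Equiv.Perm (Fin n)) (X Y : Matrix (Fin n) (Fin n) ℝ) :
    act n σ (X - Y) = act n σ X - act n σ Y := rfl

@[simp]
lemma act_smul (σ : Equiv.Perm (Fin n)) (s : ℝ) (X : Matrix (Fin n) (Fin n) ℝ) :
    act n σ (s • X) = s • act n σ X := rfl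

lemma act_mul (σ : Equiv.Perm (Fin n)) (X Y : Matrix (Fin n) (Fin n) ℝ) :
    act n σ (X * Y) = act n σ X * act n σ Y := by
  simp only [act_eq_submatrix, submatrix_mul_equiv]

@[simp]
lemma act_one (σ : Equiv.Perm (Fin n)) : act n σ 1 = 1 := by
  simp [act_eq_submatrix, submatrix_one_equiv]

@[simp]
lemma act_J (σ : Equiv.Perm (Fin n)) : act n σ (J n) = J n := rfl

@[simp]
lemma act_single (σ : Equiv.Perm (Fin n)) (p q : Fin n) :
    act n σ (single p q 1) = single (σ p) (σ q) 1 := by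
  simp [act_eq_submatrix]

lemma act_diagonal (σ : Equiv.Perm (Fin n)) (d : Fin n → ℝ) :
    act n σ (diagonal d) = diagonal (d ∘ ⇑σ⁻¹) :=
  submatrix_diagonal_equiv d σ⁻¹

lemma mem_V2_iff {X : Matrix (Fin n) (Fin n) ℝ} :
    X ∈ V2 n ↔ ∃ d : Fin n → ℝ, ∑ i, d i = 0 ∧ X = diagonal d := by
  constructor
  · rintro ⟨hoff, hsum⟩
    refine ⟨fun i => X i i, hsum, ?_⟩
    ext i j
    rcases eq_or_ne i j with rfl | hij
    · simp
    · simp [hoff i j hij, hij]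
  · rintro ⟨d, hd, rfl⟩
    exact ⟨fun i j hij => diagonal_apply_ne d hij, by simpa using hd⟩

lemma exists_equivariant_bijection_of_bijOn {U W : Submodule ℝ (Matrix (Fin n) (Fin n) ℝ)}
    (f : Matrix (Fin n) (Fin n) ℝ →ₗ[ℝ] Matrix (Fin n) (Fin n) ℝ)
    (hf : ∀ σ X, f (act n σ X) = act n σ (f X)) (hbij : Set.BijOn f U W) :
    ∃ L : U →ₗ[ℝ] W, Function.Bijective L ∧ IsEquivariantMap n L :=
  ⟨f.restrict fun _ hX => hbij.mapsTo hX, hbij.bijective, fun σ X _ => hf σ X⟩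

lemma mulLeft_act {A : Matrix (Fin n) (Fin n) ℝ} (hA : ∀ σ, act n σ A = A)
    (σ : Equiv.Perm (Fin n)) (X : Matrix (Fin n) (Fin n) ℝ) :
    LinearMap.mulLeft ℝ A (act n σ X) = act n σ (LinearMap.mulLeft ℝ A X) := by
  simp [act_mul, hA]

lemma mulRight_act {A : Matrix (Fin n) (Fin n) ℝ} (hA : ∀ σ, act n σ A = A)
    (σ : Equiv.Perm (Fin n)) (X : Matrix (Fin n) (Fin n) ℝ) :
    LinearMap.mulRight ℝ A (act n σ X) = act n σ (LinearMap.mulRight ℝ A X) := by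
  simp [act_mul, hA]

lemma J_sub_one_ne_zero (hn : 2 ≤ n) : J n - 1 ≠ 0 := fun h => by
  simpa [J, one_apply, Fin.ext_iff] using congrFun (congrFun h ⟨0, by omega⟩) ⟨1, by omega⟩

lemma exists_equivariant_bijection_V0_V1 (hn : 2 ≤ n) :
    ∃ L : V0 n →ₗ[ℝ] V1 n, Function.Bijective L ∧ IsEquivariantMap n L := by
  refine exists_equivariant_bijection_of_bijOn _ (mulLeft_act (A := J n - 1) fun σ => by simp)
    ⟨?_, ?_, ?_⟩
  · rintro _ ⟨s, rfl⟩
    exact ⟨s, by simp⟩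
  · rintro _ ⟨s, rfl⟩ _ ⟨t, rfl⟩ h
    simp only [LinearMap.mulLeft_apply, mul_smul_comm, mul_one] at h
    rw [smul_left_injective ℝ (J_sub_one_ne_zero hn) h]
  · rintro _ ⟨s, rfl⟩
    exact ⟨s • 1, ⟨s, rfl⟩, by simp⟩

lemma diagonal_mul_J (d : Fin n → ℝ) : diagonal d * J n = of fun i _ => d i := by
  ext i j
  simp [J]

lemma J_mul_diagonal (d : Fin n → ℝ) : J n * diagonal d = of fun _ j => d j := by
  ext i j
  simp [J]

lemma exists_equivariant_bijection_V2_V3 :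
    ∃ L : V2 n →ₗ[ℝ] V3 n, Function.Bijective L ∧ IsEquivariantMap n L := by
  refine exists_equivariant_bijection_of_bijOn _ (mulRight_act act_J) ⟨?_, ?_, ?_⟩
  · intro X hX
    obtain ⟨d, hd, rfl⟩ := mem_V2_iff.1 hX
    exact ⟨d, hd, diagonal_mul_J d⟩
  · intro X hX Y hY h
    obtain ⟨d, -, rfl⟩ := mem_V2_iff.1 hX
    obtain ⟨e, -, rfl⟩ := mem_V2_iff.1 hY
    simp only [LinearMap.mulRight_apply, diagonal_mul_J] at h
    exact congrArg diagonal (funext fun i => congrFun (congrFun h i) i)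
  · rintro _ ⟨r, hr, rfl⟩
    exact ⟨diagonal r, mem_V2_iff.2 ⟨r, hr, rfl⟩, diagonal_mul_J r⟩

lemma exists_equivariant_bijection_V2_V4 :
    ∃ L : V2 n →ₗ[ℝ] V4 n, Function.Bijective L ∧ IsEquivariantMap n L := by
  refine exists_equivariant_bijection_of_bijOn _ (mulLeft_act act_J) ⟨?_, ?_, ?_⟩
  · intro X hX
    obtain ⟨d, hd, rfl⟩ := mem_V2_iff.1 hX
    exact ⟨d, hd, J_mul_diagonal d⟩
  · intro X hX Y hY h
    obtain ⟨d, -, rfl⟩ := mem_V2_iff.1 hX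
    obtain ⟨e, -, rfl⟩ := mem_V2_iff.1 hY
    simp only [LinearMap.mulLeft_apply, J_mul_diagonal] at h
    exact congrArg diagonal (funext fun i => congrFun (congrFun h i) i)
  · rintro _ ⟨r, hr, rfl⟩
    exact ⟨diagonal r, mem_V2_iff.2 ⟨r, hr, rfl⟩, J_mul_diagonal r⟩

def IsInvariant (U : Submodule ℝ (Matrix (Fin n) (Fin n) ℝ)) : Prop :=
  ∀ σ : Equiv.Perm (Fin n), ∀ X ∈ U, act n σ X ∈ U

lemma isInvariant_V0 : IsInvariant (V0 n) := by
  rintro σ _ ⟨s, rfl⟩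
  exact ⟨s, by simp⟩

lemma isInvariant_V2 : IsInvariant (V2 n) := by
  intro σ X hX
  obtain ⟨d, hd, rfl⟩ := mem_V2_iff.1 hX
  refine mem_V2_iff.2 ⟨d ∘ ⇑σ⁻¹, ?_, act_diagonal σ d⟩
  rwa [Function.comp_def, Equiv.sum_comp σ⁻¹ d]

lemma isInvariant_V6 : IsInvariant (V6 n) := by
  rintro σ X ⟨hsymm, hrow, hdiag⟩
  refine ⟨?_, fun i => ?_, fun i => hdiag _⟩
  · rw [act_eq_submatrix, transpose_submatrix, ← hsymm]
  · simpa [act_eq_submatrix] using (Equiv.sum_comp σ⁻¹ (X (σ⁻¹ i))).trans (hrow _)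

def HasNegatedVector (U : Submodule ℝ (Matrix (Fin n) (Fin n) ℝ))
    (S : Set (Equiv.Perm (Fin n))) : Prop :=
  ∃ X ∈ U, X ≠ 0 ∧ ∀ σ ∈ S, act n σ X = -X

section Transfer

variable {U W : Submodule ℝ (Matrix (Fin n) (Fin n) ℝ)} {S : Set (Equiv.Perm (Fin n))}

lemma HasNegatedVector.map (h : HasNegatedVector U S) (L : U →ₗ[ℝ] W)
    (hinj : Function.Injective L) (hL : IsEquivariantMap n L) : HasNegatedVector W S := by
  obtain ⟨X, hXU, hX0, hX⟩ := h
  refine ⟨L ⟨X, hXU⟩, (L _).2, ?_, fun σ hσ => ?_⟩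
  · simpa using (map_ne_zero_iff L hinj).2 (by simpa using hX0)
  · have hmem : act n σ X ∈ U := hX σ hσ ▸ U.neg_mem hXU
    have hneg : (⟨act n σ X, hmem⟩ : U) = -⟨X, hXU⟩ := Subtype.ext (hX σ hσ)
    rw [← hL σ ⟨X, hXU⟩ hmem, hneg, map_neg]
    rfl

/- `IsEquivariantMap` constrains `L` only at those `σ · Y` that stay in its domain,
hence the invariance of `W`. -/
lemma HasNegatedVector.comap (h : HasNegatedVector U S) (L : W →ₗ[ℝ] U)
    (hbij : Function.Bijective L) (hL : IsEquivariantMap n L) (hW : IsInvariant W) :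
    HasNegatedVector W S := by
  obtain ⟨X, hXU, hX0, hX⟩ := h
  obtain ⟨Y, hY⟩ := hbij.2 ⟨X, hXU⟩
  refine ⟨Y, Y.2, fun hY0 => hX0 ?_, fun σ hσ => ?_⟩
  · have : Y = 0 := Subtype.ext hY0
    simpa [this] using congrArg Subtype.val hY.symm
  · have hact : L ⟨act n σ Y, hW σ Y Y.2⟩ = L (-Y) := by
      apply Subtype.ext
      rw [hL, hY, map_neg, hY]
      exact hX σ hσ
    exact congrArg Subtype.val (hbij.1 hact)

lemma not_exists_equivariant_bijection (hU : HasNegatedVector U S)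
    (hW : ¬ HasNegatedVector W S) (hWinv : IsInvariant W) :
    (¬ ∃ L : U →ₗ[ℝ] W, Function.Bijective L ∧ IsEquivariantMap n L) ∧
      ¬ ∃ L : W →ₗ[ℝ] U, Function.Bijective L ∧ IsEquivariantMap n L :=
  ⟨fun ⟨L, hL, he⟩ => hW (hU.map L hL.1 he), fun ⟨L, hL, he⟩ => hW (hU.comap L hL he hWinv)⟩

end Transfer

section NegatedVectors

variable {a b c d : Fin n}

lemma hasNegatedVector_V2 (hab : a ≠ b) : HasNegatedVector (V2 n) {Equiv.swap a b} := by
  refine ⟨single a a 1 - single b b 1, ⟨fun i j hij => ?_, ?_⟩, fun h => ?_, ?_⟩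
  · simp only [Matrix.sub_apply, single_apply]
    grind
  · simp [single_apply]
  · simpa [single_apply, hab.symm] using congrFun (congrFun h a) a
  · simp

/- The witness is the oriented triangle `a → b → c → a`. -/
lemma hasNegatedVector_V5 (hab : a ≠ b) (hac : a ≠ c) (hbc : b ≠ c) :
    HasNegatedVector (V5 n) {Equiv.swap a b, Equiv.swap b c} := by
  refine ⟨single a b 1 - single b a 1 + single b c 1 - single c b 1 + single c a 1 - single a c 1,
    ⟨?_, fun i => ?_⟩, fun h => ?_, ?_⟩
  · simp [transpose_single]
    abel
  · simp [single_apply, ite_and, Finset.sum_sub_distrib, Finset.sum_add_distrib]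
  · simpa [single_apply, hab, hac, hbc, hab.symm, hac.symm, hbc.symm]
      using congrFun (congrFun h a) b
  · rintro σ (rfl | rfl)
    · simp [Equiv.swap_apply_of_ne_of_ne hac.symm hbc.symm]
      abel
    · simp [Equiv.swap_apply_of_ne_of_ne hab hac]
      abel

/- The witness is `u vᵀ + v uᵀ` with `u = e_a - e_b` and `v = e_c - e_d`. -/
lemma hasNegatedVector_V6 (hab : a ≠ b) (hac : a ≠ c) (had : a ≠ d) (hbc : b ≠ c) (hbd : b ≠ d)
    (hcd : c ≠ d) : HasNegatedVector (V6 n) {Equiv.swap a b, Equiv.swap c d} := by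
  refine ⟨single a c 1 - single a d 1 - single b c 1 + single b d 1
      + single c a 1 - single d a 1 - single c b 1 + single d b 1,
    ⟨?_, fun i => ?_, fun i => ?_⟩, fun h => ?_, ?_⟩
  · simp [transpose_single]
    abel
  · simp [single_apply, ite_and, Finset.sum_sub_distrib, Finset.sum_add_distrib]
  · simp only [Matrix.add_apply, Matrix.sub_apply, single_apply]
    grind
  · simpa [single_apply, hab, hac, had, hbc, hbd, hcd, hab.symm, hac.symm, had.symm, hbc.symm,
      hbd.symm, hcd.symm] using congrFun (congrFun h a) c
  · rintro σ (rfl | rfl)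
    · simp [Equiv.swap_apply_of_ne_of_ne hac.symm hbc.symm,
        Equiv.swap_apply_of_ne_of_ne had.symm hbd.symm]
      abel
    · simp [Equiv.swap_apply_of_ne_of_ne hac had, Equiv.swap_apply_of_ne_of_ne hbc hbd]
      abel

lemma apply_swap_of_act_swap_eq_neg {X : Matrix (Fin n) (Fin n) ℝ} {p q : Fin n}
    (h : act n (Equiv.swap p q) X = -X) (i j : Fin n) :
    X (Equiv.swap p q i) (Equiv.swap p q j) = -X i j := by
  simpa [act] using congrFun (congrFun h i) j

lemma apply_eq_zero_of_act_swap_eq_neg {X : Matrix (Fin n) (Fin n) ℝ} {p q i j : Fin n}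
    (h : act n (Equiv.swap p q) X = -X) (hip : i ≠ p) (hiq : i ≠ q) (hjp : j ≠ p)
    (hjq : j ≠ q) : X i j = 0 := by
  have := apply_swap_of_act_swap_eq_neg h i j
  rw [Equiv.swap_apply_of_ne_of_ne hip hiq, Equiv.swap_apply_of_ne_of_ne hjp hjq] at this
  linarith

lemma apply_eq_zero_of_act_swap_eq_neg_of_symm {X : Matrix (Fin n) (Fin n) ℝ} {p q : Fin n}
    (hX : X = Xᵀ) (h : act n (Equiv.swap p q) X = -X) : X p q = 0 := by
  have h₁ := apply_swap_of_act_swap_eq_neg h p q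
  have h₂ : X q p = X p q := congrFun (congrFun hX q) p
  rw [Equiv.swap_apply_left, Equiv.swap_apply_right] at h₁
  linarith

lemma not_hasNegatedVector_V0 {S : Set (Equiv.Perm (Fin n))} (hS : S.Nonempty) :
    ¬ HasNegatedVector (V0 n) S := by
  rintro ⟨_, ⟨s, rfl⟩, hX0, h⟩
  obtain ⟨σ, hσ⟩ := hS
  have := h σ hσ
  simp only [act_smul, act_one] at this
  rw [eq_neg_iff_add_eq_zero, ← two_smul ℝ] at this
  exact hX0 ((smul_eq_zero.1 this).resolve_left two_ne_zero)

lemma not_hasNegatedVector_V2_of_disjoint (hac : a ≠ c) (had : a ≠ d) (hbc : b ≠ c)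
    (hbd : b ≠ d) : ¬ HasNegatedVector (V2 n) {Equiv.swap a b, Equiv.swap c d} := by
  rintro ⟨X, ⟨hoff, -⟩, hX0, h⟩
  refine hX0 (Matrix.ext fun i j => ?_)
  obtain rfl | hij := eq_or_ne i j
  · by_cases hi : i = a ∨ i = b
    · have hic : i ≠ c := by rintro rfl; tauto
      have hid : i ≠ d := by rintro rfl; tauto
      exact apply_eq_zero_of_act_swap_eq_neg (h _ (by simp)) hic hid hic hid
    · obtain ⟨hia, hib⟩ := not_or.1 hi
      exact apply_eq_zero_of_act_swap_eq_neg (h _ (by simp)) hia hib hia hib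
  · exact hoff i j hij

lemma not_hasNegatedVector_V2_of_adjacent (hab : a ≠ b) (hac : a ≠ c) :
    ¬ HasNegatedVector (V2 n) {Equiv.swap a b, Equiv.swap b c} := by
  rintro ⟨X, ⟨hoff, -⟩, hX0, h⟩
  have hτ := h _ (by simp : Equiv.swap a b ∈ _)
  have haa : X a a = 0 := apply_eq_zero_of_act_swap_eq_neg (h _ (by simp)) hab hac hab hac
  refine hX0 (Matrix.ext fun i j => ?_)
  obtain rfl | hij := eq_or_ne i j
  · by_cases hi : i = a ∨ i = b
    · obtain rfl | rfl := hi
      · exact haa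
      · simpa [haa] using apply_swap_of_act_swap_eq_neg hτ a a
    · obtain ⟨hia, hib⟩ := not_or.1 hi
      exact apply_eq_zero_of_act_swap_eq_neg hτ hia hib hia hib
  · exact hoff i j hij

lemma not_hasNegatedVector_V6_of_adjacent (hab : a ≠ b) (hac : a ≠ c) (hbc : b ≠ c) :
    ¬ HasNegatedVector (V6 n) {Equiv.swap a b, Equiv.swap b c} := by
  rintro ⟨X, ⟨hsymm, -, hdiag⟩, hX0, h⟩
  have hτ := h _ (by simp : Equiv.swap a b ∈ _)
  have hρ := h _ (by simp : Equiv.swap b c ∈ _)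
  have hX : ∀ i j, X j i = X i j := fun i j => congrFun (congrFun hsymm j) i
  have hbc0 : X b c = 0 := apply_eq_zero_of_act_swap_eq_neg_of_symm hsymm hρ
  have hrow : ∀ j, X b j = 0 := by
    intro j
    by_cases hj : j = a ∨ j = b ∨ j = c
    · obtain rfl | rfl | rfl := hj
      · rw [hX]; exact apply_eq_zero_of_act_swap_eq_neg_of_symm hsymm hτ
      · exact hdiag j
      · exact hbc0
    · obtain ⟨hja, hjb, hjc⟩ : j ≠ a ∧ j ≠ b ∧ j ≠ c := by tauto
      have := apply_swap_of_act_swap_eq_neg hτ a j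
      rw [Equiv.swap_apply_left, Equiv.swap_apply_of_ne_of_ne hja hjb,
        apply_eq_zero_of_act_swap_eq_neg hρ hab hac hjb hjc] at this
      simpa using this
  have hac0 : X a c = 0 := by
    simpa [Equiv.swap_apply_of_ne_of_ne hac.symm hbc.symm, hbc0] using
      apply_swap_of_act_swap_eq_neg hτ b c
  refine hX0 (Matrix.ext fun i j => ?_)
  by_cases hb : i = b ∨ j = b
  · obtain rfl | rfl := hb
    · exact hrow j
    · rw [← hX]; exact hrow i
  obtain ⟨hib, hjb⟩ := not_or.1 hb
  rcases eq_or_ne a i with rfl | hai <;> rcases eq_or_ne a j with rfl | haj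
  · exact hdiag a
  · rcases eq_or_ne c j with rfl | hcj
    · exact hac0
    · exact apply_eq_zero_of_act_swap_eq_neg hρ hab hac hjb hcj.symm
  · rcases eq_or_ne c i with rfl | hci
    · rw [← hX]; exact hac0
    · exact apply_eq_zero_of_act_swap_eq_neg hρ hib hci.symm hab hac
  · exact apply_eq_zero_of_act_swap_eq_neg hτ hai.symm hib haj.symm hjb

end NegatedVectors

end Development

/-- For `n ≥ 4` there are `Sₙ`-equivariant linear bijections
`V₀ → V₁`, `V₂ → V₃` and `V₂ → V₄`, but no equivariant linear bijection between
any two distinct spaces among `{V₀, V₂, V₅, V₆}`. -/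
theorem isomorphism_types (hn : 4 ≤ n) :
    (∃ L : V n 0 →ₗ[ℝ] V n 1, Function.Bijective L ∧ IsEquivariantMap n L) ∧
    (∃ L : V n 2 →ₗ[ℝ] V n 3, Function.Bijective L ∧ IsEquivariantMap n L) ∧
    (∃ L : V n 2 →ₗ[ℝ] V n 4, Function.Bijective L ∧ IsEquivariantMap n L) ∧
    (∀ i j : Fin 7, i ∈ ({0, 2, 5, 6} : Set (Fin 7)) → j ∈ ({0, 2, 5, 6} : Set (Fin 7)) →
      i ≠ j → ¬∃ L : V n i →ₗ[ℝ] V n j, Function.Bijective L ∧ IsEquivariantMap n L) := by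
  refine ⟨exists_equivariant_bijection_V0_V1 (by omega), exists_equivariant_bijection_V2_V3,
    exists_equivariant_bijection_V2_V4, ?_⟩
  obtain ⟨a, b, c, d, hab, hac, had, hbc, hbd, hcd⟩ :
      ∃ a b c d : Fin n, a ≠ b ∧ a ≠ c ∧ a ≠ d ∧ b ≠ c ∧ b ≠ d ∧ c ≠ d :=
    ⟨⟨0, by omega⟩, ⟨1, by omega⟩, ⟨2, by omega⟩, ⟨3, by omega⟩, by simp [Fin.ext_iff]⟩
  have h20 := not_exists_equivariant_bijection (hasNegatedVector_V2 hab)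
    (not_hasNegatedVector_V0 (Set.singleton_nonempty _)) isInvariant_V0
  have h50 := not_exists_equivariant_bijection (hasNegatedVector_V5 hab hac hbc)
    (not_hasNegatedVector_V0 (Set.insert_nonempty _ _)) isInvariant_V0
  have h60 := not_exists_equivariant_bijection (hasNegatedVector_V6 hab hac had hbc hbd hcd)
    (not_hasNegatedVector_V0 (Set.insert_nonempty _ _)) isInvariant_V0
  have h52 := not_exists_equivariant_bijection (hasNegatedVector_V5 hab hac hbc)
    (not_hasNegatedVector_V2_of_adjacent hab hac) isInvariant_V2
  have h62 := not_exists_equivariant_bijection (hasNegatedVector_V6 hab hac had hbc hbd hcd)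
    (not_hasNegatedVector_V2_of_disjoint hac had hbc hbd) isInvariant_V2
  have h56 := not_exists_equivariant_bijection (hasNegatedVector_V5 hab hac hbc)
    (not_hasNegatedVector_V6_of_adjacent hab hac hbc) isInvariant_V6
  intro i j hi hj hij
  simp only [Set.mem_insert_iff, Set.mem_singleton_iff] at hi hj
  rcases hi with rfl | rfl | rfl | rfl <;> rcases hj with rfl | rfl | rfl | rfl
  exacts [absurd rfl hij, h20.2, h50.2, h60.2, h20.1, absurd rfl hij, h52.2, h62.2,
    h50.1, h52.1, absurd rfl hij, h56.1, h60.1, h62.1, h56.2, absurd rfl hij]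

end GraphIso
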